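/- arXiv:2602.01950 — 6 statements merged into one kernel-verified Lean document; each statement's English description precedes it below -/
import Mathlib

section
/- Let D₀ be a fundamental discriminant with gcd(D₀, N) = 1 and Q = [a,b,c] a binary quadratic form with N ∣ a. If gcd(D₀, a, b, c) = 1 and Q represents an integer r with gcd(r, D₀) = 1, then the form Q|W_N = [cN, −b, a/N] represents Nr, and gcd(Nr, D₀) = 1; moreover gcd(D₀, cN, −b, a/N) = 1. -/
/-- A binary quadratic form `[a,b,c]` represents `r` if `ax² + bxy + cy² = r`
has an integer solution. -/
def Represents (a b c r : ℤ) : Prop :=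
  ∃ x y : ℤ, a * x ^ 2 + b * x * y + c * y ^ 2 = r

/-- A fundamental discriminant: either `D ≡ 1 (mod 4)` squarefree, or `D = 4m`
with `m` squarefree and `m ≡ 2, 3 (mod 4)`. -/
def IsFundamentalDiscriminant (D : ℤ) : Prop :=
  (D % 4 = 1 ∧ Squarefree D) ∨
  (D % 4 = 0 ∧ Squarefree (D / 4) ∧ (D / 4 % 4 = 2 ∨ D / 4 % 4 = 3))

/-!
Substituting `(y, -N x)` into `Q|W_N` gives `N · Q(x, y)`, so `Q|W_N` represents `N r`.
A common divisor of `D₀` and the coefficients `cN, -b, a/N` is prime to `N`, hence divides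
`c`, and it divides `a = (a/N) N`; so it divides `gcd(D₀, a, b, c) = 1`.
-/

theorem Represents.fricke {a b c r N : ℤ} (h : Represents a b c r) (hna : N ∣ a) :
    Represents (c * N) (-b) (a / N) (N * r) := by
  obtain ⟨x, y, rfl⟩ := h
  refine ⟨y, -(N * x), ?_⟩
  linear_combination (N * x ^ 2) * Int.ediv_mul_cancel hna

theorem gcd_fricke_coeffs_eq_one {D N a b c : ℤ} (hDN : Int.gcd D N = 1) (hna : N ∣ a)
    (h : Nat.gcd D.natAbs (Nat.gcd a.natAbs (Nat.gcd b.natAbs c.natAbs)) = 1) :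
    Nat.gcd D.natAbs (Nat.gcd (c * N).natAbs (Nat.gcd (-b).natAbs (a / N).natAbs)) = 1 := by
  set d := Nat.gcd D.natAbs (Nat.gcd (c * N).natAbs (Nat.gcd (-b).natAbs (a / N).natAbs))
  have hdD : d ∣ D.natAbs := Nat.gcd_dvd_left _ _
  have hdcN : d ∣ c.natAbs * N.natAbs := by
    rw [← Int.natAbs_mul]; exact (Nat.gcd_dvd_right _ _).trans (Nat.gcd_dvd_left _ _)
  have hdb : d ∣ b.natAbs := by
    rw [← Int.natAbs_neg]
    exact (Nat.gcd_dvd_right _ _).trans ((Nat.gcd_dvd_right _ _).trans (Nat.gcd_dvd_left _ _))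
  have hdk : d ∣ (a / N).natAbs :=
    (Nat.gcd_dvd_right _ _).trans ((Nat.gcd_dvd_right _ _).trans (Nat.gcd_dvd_right _ _))
  have hdc : d ∣ c.natAbs := (Nat.Coprime.coprime_dvd_left hdD hDN).dvd_of_dvd_mul_right hdcN
  have hda : d ∣ a.natAbs := by
    rw [← Int.ediv_mul_cancel hna, Int.natAbs_mul]; exact hdk.mul_right _
  exact Nat.eq_one_of_dvd_one (h ▸ Nat.dvd_gcd hdD (Nat.dvd_gcd hda (Nat.dvd_gcd hdb hdc)))

theorem fricke_represents_general (N D₀ a b c r : ℤ)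
    (hcop : Int.gcd D₀ N = 1) (hna : N ∣ a)
    (hgcd : Nat.gcd D₀.natAbs (Nat.gcd a.natAbs (Nat.gcd b.natAbs c.natAbs)) = 1)
    (hrep : Represents a b c r) (hr : Int.gcd r D₀ = 1) :
    Represents (c * N) (-b) (a / N) (N * r) ∧ Int.gcd (N * r) D₀ = 1 ∧
      Nat.gcd D₀.natAbs
        (Nat.gcd (c * N).natAbs (Nat.gcd (-b).natAbs (a / N).natAbs)) = 1 := by
  refine ⟨hrep.fricke hna, ?_, gcd_fricke_coeffs_eq_one hcop hna hgcd⟩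
  rw [← Int.isCoprime_iff_gcd_eq_one] at hcop hr ⊢
  exact hcop.symm.mul_left hr

/-- if `gcd(D₀,a,b,c) = 1` and `Q = [a,b,c]` (with `N ∣ a`) represents
`r` coprime to `D₀`, then `Q|W_N = [cN, −b, a/N]` represents `Nr`, `gcd(Nr, D₀) = 1`,
and `gcd(D₀, cN, −b, a/N) = 1`. -/
theorem fricke_represents (N D₀ a b c r : ℤ) (hN : 0 < N)
    (hfund : IsFundamentalDiscriminant D₀)
    (hcop : Int.gcd D₀ N = 1) (hna : N ∣ a)
    (hgcd : Nat.gcd D₀.natAbs (Nat.gcd a.natAbs (Nat.gcd b.natAbs c.natAbs)) = 1)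
    (hrep : Represents a b c r) (hr : Int.gcd r D₀ = 1) :
    Represents (c * N) (-b) (a / N) (N * r) ∧ Int.gcd (N * r) D₀ = 1 ∧
      Nat.gcd D₀.natAbs
        (Nat.gcd (c * N).natAbs (Nat.gcd (-b).natAbs (a / N).natAbs)) = 1 :=
  fricke_represents_general N D₀ a b c r hcop hna hgcd hrep hr
end

section
/- Let D₀ be a fundamental discriminant with gcd(D₀,N)=1 and Q = [a,b,c] with N ∣ a. Then the extended genus character satisfies χ_{D₀}(Q|W_N) = (D₀/N)·χ_{D₀}(Q), where (·/·) is the Kronecker symbol and Q|W_N = [cN, −b, a/N]. -/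
/-- The Kronecker symbol `(a/2)`. -/
def kron2 (a : ℤ) : ℤ :=
  if a % 2 = 0 then 0 else if a % 8 = 1 ∨ a % 8 = 7 then 1 else -1

/-- The Kronecker symbol `(a/n)`, via the Jacobi symbol for the odd part. -/
def kronecker (a n : ℤ) : ℤ :=
  if n = 0 then (if a = 1 ∨ a = -1 then 1 else 0)
  else
    (if n < 0 ∧ a < 0 then -1 else 1) *
      kron2 a ^ (n.natAbs.factorization 2) *
      jacobiSym a (n.natAbs / 2 ^ (n.natAbs.factorization 2))

/-- gcd of four integers. -/
def gcd4 (a b c d : ℤ) : ℕ :=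
  Nat.gcd (Nat.gcd a.natAbs b.natAbs) (Nat.gcd c.natAbs d.natAbs)

/-- `χ` is the extended genus character attached to the discriminant `D₀`:
`χ(Q) = 0` if `gcd(a,b,c,D₀) > 1`, and `χ(Q) = (D₀/r)` (Kronecker symbol) for any
`r` represented by `Q` with `gcd(r, D₀) = 1`, whenever `D₀ ∣ b² − 4ac`. -/
def IsGenusChar (D₀ : ℤ) (χ : ℤ × ℤ × ℤ → ℤ) : Prop :=
  ∀ a b c : ℤ, D₀ ∣ b ^ 2 - 4 * a * c →
    ((1 < gcd4 a b c D₀ → χ (a, b, c) = 0) ∧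
     (gcd4 a b c D₀ = 1 →
       ∀ r : ℤ, (∃ x y : ℤ, a * x ^ 2 + b * x * y + c * y ^ 2 = r) →
         Int.gcd r D₀ = 1 → χ (a, b, c) = kronecker D₀ r))

/-! `Q` and `Q|W_N` have the same discriminant, and since `N` is prime to `D₀`, a prime of `D₀`
divides all coefficients of `Q|W_N` exactly when it divides all those of `Q`; so both sides vanish
together. In the primitive case pick `(x, y)` with `r = Q(x, y)` prime to `D₀`; then
`(Q|W_N)(-y, N x) = N r` is prime to `D₀` as well, and the Kronecker symbol is multiplicative in
its lower argument: `(D₀/N r) = (D₀/N) (D₀/r)`. -/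

lemma kronecker_one_left (n : ℤ) : kronecker 1 n = 1 := by
  unfold kronecker kron2
  split <;> norm_num [jacobiSym.one_left]

lemma kronecker_mul_right_of_pos (D : ℤ) {n r : ℤ} (hn : 0 < n) (hr : r ≠ 0) :
    kronecker D (n * r) = kronecker D n * kronecker D r := by
  have hn' : n.natAbs ≠ 0 := Int.natAbs_ne_zero.mpr hn.ne'
  have hr' : r.natAbs ≠ 0 := Int.natAbs_ne_zero.mpr hr
  set i := n.natAbs.factorization 2
  set j := r.natAbs.factorization 2
  have hodd : n.natAbs * r.natAbs / 2 ^ (i + j) = (n.natAbs / 2 ^ i) * (r.natAbs / 2 ^ j) := by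
    rw [pow_add, Nat.div_mul_div_comm (Nat.ordProj_dvd _ _) (Nat.ordProj_dvd _ _)]
  have : NeZero (n.natAbs / 2 ^ i) := ⟨(Nat.ordCompl_pos 2 hn').ne'⟩
  have : NeZero (r.natAbs / 2 ^ j) := ⟨(Nat.ordCompl_pos 2 hr').ne'⟩
  have hsign : n * r < 0 ↔ r < 0 := ⟨fun h => by nlinarith, mul_neg_of_pos_of_neg hn⟩
  simp only [kronecker, mul_ne_zero hn.ne' hr, hn.ne', hr, if_false, Int.natAbs_mul,
    Nat.factorization_mul hn' hr', Finsupp.add_apply, hsign, hn.not_gt, false_and]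
  rw [hodd, jacobiSym.mul_right, pow_add]
  ring

lemma kronecker_mul_right_of_gcd_eq_one {D n r : ℤ} (hD : D ≠ -1) (hn : 0 < n)
    (hr : Int.gcd r D = 1) : kronecker D (n * r) = kronecker D n * kronecker D r := by
  rcases eq_or_ne r 0 with rfl | hr0
  · have hD1 : D = 1 := by
      rw [Int.zero_gcd, Int.natAbs_eq_iff] at hr
      omega
    simp [hD1, kronecker_one_left]
  · exact kronecker_mul_right_of_pos D hn hr0

lemma dvd_gcd4_iff {p : ℕ} {a b c d : ℤ} :
    p ∣ gcd4 a b c d ↔ (p : ℤ) ∣ a ∧ (p : ℤ) ∣ b ∧ (p : ℤ) ∣ c ∧ (p : ℤ) ∣ d := by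
  simp [gcd4, Nat.dvd_gcd_iff, ← Int.natCast_dvd, and_assoc]

lemma gcd4_eq_one_iff {a b c d : ℤ} : gcd4 a b c d = 1 ↔
    ∀ p : ℕ, p.Prime → (p : ℤ) ∣ d → ¬((p : ℤ) ∣ a ∧ (p : ℤ) ∣ b ∧ (p : ℤ) ∣ c) := by
  simp only [Nat.eq_one_iff_not_exists_prime_dvd, dvd_gcd4_iff]
  grind

lemma one_lt_gcd4 {a b c d : ℤ} (hd : d ≠ 0) (h : gcd4 a b c d ≠ 1) : 1 < gcd4 a b c d := by
  have h0 : gcd4 a b c d ≠ 0 := by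
    simp only [gcd4, ne_eq, Nat.gcd_eq_zero_iff, Int.natAbs_eq_zero]
    tauto
  omega

lemma Int.gcd_eq_one_of_forall_prime {r d : ℤ}
    (h : ∀ p : ℕ, p.Prime → (p : ℤ) ∣ d → ¬(p : ℤ) ∣ r) : Int.gcd r d = 1 := by
  rw [Int.gcd_eq_natAbs]
  exact Nat.coprime_of_dvd fun p hp hr hd =>
    h p hp (Int.natCast_dvd.mpr hd) (Int.natCast_dvd.mpr hr)

lemma natCast_dvd_prod_primes_iff {p : ℕ} (hp : p.Prime) {S : Finset ℕ} (hS : ∀ q ∈ S, q.Prime) :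
    (p : ℤ) ∣ ∏ q ∈ S, (q : ℤ) ↔ p ∈ S := by
  rw [Prime.dvd_finsetProd_iff (Nat.prime_iff_prime_int.mp hp)]
  refine ⟨fun ⟨q, hq, hpq⟩ => ?_, fun hpS => ⟨p, hpS, dvd_rfl⟩⟩
  rwa [(Nat.prime_dvd_prime_iff_eq hp (hS q hq)).mp (Int.natCast_dvd_natCast.mp hpq)]

section QuadraticForm

variable {p a b c x y : ℤ}

lemma Prime.not_dvd_form_of_dvd_right (hp : Prime p) (hy : p ∣ y) (ha : ¬p ∣ a) (hx : ¬p ∣ x) :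
    ¬p ∣ a * x ^ 2 + b * x * y + c * y ^ 2 := by
  intro h
  have hax : p ∣ a * x ^ 2 := by
    have := dvd_sub h (hy.mul_right (b * x + c * y))
    rwa [show a * x ^ 2 + b * x * y + c * y ^ 2 - y * (b * x + c * y) = a * x ^ 2 by ring] at this
  exact (hp.dvd_mul.mp hax).elim ha fun h => hx (hp.dvd_of_dvd_pow h)

lemma Prime.not_dvd_form_of_dvd_left (hp : Prime p) (hx : p ∣ x) (hc : ¬p ∣ c) (hy : ¬p ∣ y) :
    ¬p ∣ a * x ^ 2 + b * x * y + c * y ^ 2 := by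
  rw [show a * x ^ 2 + b * x * y + c * y ^ 2 = c * y ^ 2 + b * y * x + a * x ^ 2 by ring]
  exact hp.not_dvd_form_of_dvd_right hx hc hy

lemma Prime.not_dvd_form_of_dvd_of_dvd (hp : Prime p) (ha : p ∣ a) (hb : ¬p ∣ b) (hc : p ∣ c)
    (hx : ¬p ∣ x) (hy : ¬p ∣ y) : ¬p ∣ a * x ^ 2 + b * x * y + c * y ^ 2 := by
  intro h
  have hbxy : p ∣ b * (x * y) := by
    have := dvd_sub h (dvd_add (ha.mul_right (x ^ 2)) (hc.mul_right (y ^ 2)))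
    rwa [show a * x ^ 2 + b * x * y + c * y ^ 2 - (a * x ^ 2 + c * y ^ 2) = b * (x * y) by ring]
      at this
  rcases hp.dvd_mul.mp hbxy with h | h
  · exact hb h
  · exact (hp.dvd_mul.mp h).elim hx hy

end QuadraticForm

/-- Witnesses: `y` is the product of the primes of `d` not dividing `a`, and `x` the product of
those dividing `a` but not `c`. -/
lemma exists_form_gcd_eq_one {a b c d : ℤ} (hd : d ≠ 0) (h : gcd4 a b c d = 1) :
    ∃ x y : ℤ, Int.gcd (a * x ^ 2 + b * x * y + c * y ^ 2) d = 1 := by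
  classical
  let P := d.natAbs.primeFactors
  let Sx := P.filter fun p : ℕ => (p : ℤ) ∣ a ∧ ¬(p : ℤ) ∣ c
  let Sy := P.filter fun p : ℕ => ¬(p : ℤ) ∣ a
  refine ⟨∏ p ∈ Sx, (p : ℤ), ∏ p ∈ Sy, (p : ℤ), Int.gcd_eq_one_of_forall_prime fun p hp hpd => ?_⟩
  have hpP : p ∈ P := Nat.mem_primeFactors.mpr
    ⟨hp, Int.natCast_dvd.mp hpd, Int.natAbs_ne_zero.mpr hd⟩
  have hP : ∀ S ⊆ P, ∀ q ∈ S, q.Prime := fun S hS q hq => Nat.prime_of_mem_primeFactors (hS hq)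
  have hx := natCast_dvd_prod_primes_iff hp (hP Sx (Finset.filter_subset _ _))
  have hy := natCast_dvd_prod_primes_iff hp (hP Sy (Finset.filter_subset _ _))
  simp only [Sx, Sy, Finset.mem_filter, hpP, true_and] at hx hy
  have hpp := Nat.prime_iff_prime_int.mp hp
  by_cases ha : (p : ℤ) ∣ a
  · by_cases hc : (p : ℤ) ∣ c
    · have hb : ¬(p : ℤ) ∣ b := fun hb => gcd4_eq_one_iff.mp h p hp hpd ⟨ha, hb, hc⟩
      exact hpp.not_dvd_form_of_dvd_of_dvd ha hb hc (by tauto) (by tauto)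
    · exact hpp.not_dvd_form_of_dvd_left (by tauto) hc (by tauto)
  · exact hpp.not_dvd_form_of_dvd_right (by tauto) ha (by tauto)

lemma IsFundamentalDiscriminant.ne_zero {D : ℤ} (hD : IsFundamentalDiscriminant D) : D ≠ 0 := by
  rintro rfl
  rcases hD with ⟨h, -⟩ | ⟨-, -, h⟩ <;> norm_num at h

lemma IsFundamentalDiscriminant.ne_neg_one {D : ℤ} (hD : IsFundamentalDiscriminant D) :
    D ≠ -1 := by
  rintro rfl
  rcases hD with ⟨h, -⟩ | ⟨h, -⟩ <;> norm_num at h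

lemma IsGenusChar.eq_zero {D₀ a b c : ℤ} {χ : ℤ × ℤ × ℤ → ℤ} (hχ : IsGenusChar D₀ χ)
    (hD₀ : D₀ ≠ 0) (hdisc : D₀ ∣ b ^ 2 - 4 * a * c) (hg : gcd4 a b c D₀ ≠ 1) :
    χ (a, b, c) = 0 :=
  (hχ a b c hdisc).1 (one_lt_gcd4 hD₀ hg)

section Fricke

variable {N a : ℤ}

lemma fricke_discr (hna : N ∣ a) (b c : ℤ) :
    (-b) ^ 2 - 4 * (c * N) * (a / N) = b ^ 2 - 4 * a * c := by
  obtain ⟨k, rfl⟩ := hna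
  rcases eq_or_ne N 0 with rfl | hN
  · simp
  · rw [Int.mul_ediv_cancel_left _ hN]; ring

lemma fricke_eval (hna : N ∣ a) (b c x y : ℤ) :
    c * N * (-y) ^ 2 + -b * -y * (N * x) + a / N * (N * x) ^ 2 =
      N * (a * x ^ 2 + b * x * y + c * y ^ 2) := by
  obtain ⟨k, rfl⟩ := hna
  rcases eq_or_ne N 0 with rfl | hN
  · simp
  · rw [Int.mul_ediv_cancel_left _ hN]; ring

lemma gcd4_fricke_eq_one_iff {D₀ : ℤ} (hcop : Int.gcd D₀ N = 1) (hna : N ∣ a) (b c : ℤ) :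
    gcd4 (c * N) (-b) (a / N) D₀ = 1 ↔ gcd4 a b c D₀ = 1 := by
  have ha : a = a / N * N := (Int.ediv_mul_cancel hna).symm
  simp only [gcd4_eq_one_iff]
  refine forall₂_congr fun p hp => imp_congr_right fun hpD => not_congr ?_
  have hpp := Nat.prime_iff_prime_int.mp hp
  have hpN : ¬(p : ℤ) ∣ N := fun hpN =>
    hpp.not_isUnit ((Int.isCoprime_iff_gcd_eq_one.mpr hcop).isUnit_of_dvd' hpD hpN)
  have hmul : ∀ z : ℤ, (p : ℤ) ∣ z * N ↔ (p : ℤ) ∣ z := fun z =>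
    hpp.dvd_mul.trans (or_iff_left hpN)
  conv_rhs => rw [ha]
  rw [hmul, hmul, dvd_neg]
  tauto

end Fricke

theorem genusChar_fricke_general (N D D₀ a b c : ℤ) (hN : 0 < N)
    (hD₀ : IsFundamentalDiscriminant D₀) (hcop : Int.gcd D₀ N = 1)
    (hna : N ∣ a) (hdisc : b ^ 2 - 4 * a * c = D * D₀)
    (χ : ℤ × ℤ × ℤ → ℤ) (hχ : IsGenusChar D₀ χ) :
    χ (c * N, -b, a / N) = kronecker D₀ N * χ (a, b, c) := by
  have hQ : D₀ ∣ b ^ 2 - 4 * a * c := hdisc ▸ dvd_mul_left D₀ D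
  have hQW : D₀ ∣ (-b) ^ 2 - 4 * (c * N) * (a / N) := fricke_discr hna b c ▸ hQ
  by_cases hg : gcd4 a b c D₀ = 1
  · obtain ⟨x, y, hr⟩ := exists_form_gcd_eq_one hD₀.ne_zero hg
    have hNr : Int.gcd (N * (a * x ^ 2 + b * x * y + c * y ^ 2)) D₀ = 1 := by
      rw [← Int.isCoprime_iff_gcd_eq_one] at hcop hr ⊢
      exact hcop.symm.mul_left hr
    rw [(hχ _ _ _ hQW).2 ((gcd4_fricke_eq_one_iff hcop hna b c).mpr hg) _
        ⟨-y, N * x, fricke_eval hna b c x y⟩ hNr, (hχ _ _ _ hQ).2 hg _ ⟨x, y, rfl⟩ hr]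
    exact kronecker_mul_right_of_gcd_eq_one hD₀.ne_neg_one hN hr
  · have hgW := mt (gcd4_fricke_eq_one_iff hcop hna b c).mp hg
    rw [hχ.eq_zero hD₀.ne_zero hQW hgW, hχ.eq_zero hD₀.ne_zero hQ hg, mul_zero]

/-- the extended genus character satisfies
`χ_{D₀}(Q|W_N) = (D₀/N) · χ_{D₀}(Q)` where `Q|W_N = [cN, −b, a/N]`. -/
theorem genusChar_fricke (N D D₀ a b c : ℤ) (hN : 0 < N)
    (hD : IsFundamentalDiscriminant D) (hD₀ : IsFundamentalDiscriminant D₀)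
    (hcopD : Int.gcd D N = 1) (hcop : Int.gcd D₀ N = 1)
    (hna : N ∣ a) (hdisc : b ^ 2 - 4 * a * c = D * D₀)
    (χ : ℤ × ℤ × ℤ → ℤ) (hχ : IsGenusChar D₀ χ) :
    χ (c * N, -b, a / N) = kronecker D₀ N * χ (a, b, c) :=
  genusChar_fricke_general N D D₀ a b c hN hD₀ hcop hna hdisc χ hχ
end

section
/- Let N be a positive integer and Δ a positive non-square discriminant with √Δ > N. If there exists a form Q = [a,b,c] with N ∣ a, a < 0 and b²−4ac = Δ, then for every rational x there exists a form Q' = [a',b',c'] with N ∣ a', a' < 0, b'²−4a'c' = Δ and Q'(x,1) > 0. -/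
/-- if `√Δ > N` and there is a form `[a,b,c]` with `N ∣ a`, `a < 0` and
discriminant `Δ`, then for every rational `x` there is such a form which is moreover
positive at `(x,1)`. -/
theorem qnd_nonempty_at_every_rational (N Δ : ℤ) (hN : 0 < N) (hΔpos : 0 < Δ)
    (hns : ¬ IsSquare Δ) (hdisc : Δ % 4 = 0 ∨ Δ % 4 = 1)
    (hsqrt : (N : ℝ) < Real.sqrt (Δ : ℝ))
    (hex : ∃ a b c : ℤ, N ∣ a ∧ a < 0 ∧ b ^ 2 - 4 * a * c = Δ) :
    ∀ x : ℚ, ∃ a b c : ℤ, N ∣ a ∧ a < 0 ∧ b ^ 2 - 4 * a * c = Δ ∧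
      0 < (a : ℚ) * x ^ 2 + (b : ℚ) * x + (c : ℚ) := by
  obtain ⟨a, b, c, ⟨m, hm⟩, ha, hd⟩ := hex
  intro x
  -- the form [-N, b, c₀] has the same discriminant
  set c₀ : ℤ := -(m * c) with hc₀
  have hΔ : b ^ 2 + 4 * N * c₀ = Δ := by
    rw [hc₀]; rw [hm] at hd; linarith
  -- choose the integer translation r
  set t₀ : ℝ := ((b : ℝ) - Real.sqrt Δ) / (2 * N) with ht₀
  set r : ℤ := ⌊t₀ - (x : ℝ)⌋ + 1 with hr
  refine ⟨-N, b - 2 * N * r, c₀ + b * r - N * r ^ 2, ⟨-1, by ring⟩, by omega, by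
    rw [← hΔ]; ring, ?_⟩
  -- positivity at x
  have hNR : (0 : ℝ) < (N : ℝ) := by exact_mod_cast hN
  have hs : (0 : ℝ) ≤ (Δ : ℝ) := by positivity
  have hsq : Real.sqrt Δ ^ 2 = (Δ : ℝ) := Real.sq_sqrt hs
  set s : ℝ := (x : ℝ) + r with hsdef
  have h1 : t₀ < s := by
    have := Int.lt_floor_add_one (t₀ - (x : ℝ))
    have : t₀ - (x : ℝ) < (r : ℝ) := by push_cast [hr]; linarith
    linarith [this]
  have h2 : s < t₀ + Real.sqrt Δ / N := by
    have hf : ((⌊t₀ - (x : ℝ)⌋ : ℝ)) ≤ t₀ - (x : ℝ) := Int.floor_le _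
    have hone : (1 : ℝ) < Real.sqrt Δ / N := by
      rw [lt_div_iff₀ hNR]; linarith
    have : (r : ℝ) ≤ t₀ - (x : ℝ) + 1 := by push_cast [hr]; linarith
    linarith
  -- hence |2Ns - b| < √Δ
  have hb : t₀ * (2 * N) = (b : ℝ) - Real.sqrt Δ := by
    rw [ht₀]; exact div_mul_cancel₀ _ (by positivity)
  have hd2 : (N : ℝ) * (Real.sqrt Δ / N) = Real.sqrt Δ :=
    mul_div_cancel₀ _ (ne_of_gt hNR)
  have hlo : -Real.sqrt Δ < 2 * N * s - b := by nlinarith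
  have hhi : 2 * N * s - b < Real.sqrt Δ := by nlinarith
  have hsqlt : (2 * N * s - b) ^ 2 < (Δ : ℝ) := by
    have := sq_lt_sq' hlo hhi
    rwa [hsq] at this
  -- transfer to ℚ
  have hq : ((2 * N * (x + r) - b : ℚ)) ^ 2 < (Δ : ℚ) := by
    have : (((2 * N * (x + r) - b : ℚ) : ℝ)) ^ 2 < (Δ : ℝ) := by
      push_cast
      convert hsqlt using 3 <;> push_cast [hsdef] <;> ring
    exact_mod_cast this
  have hNQ : (0 : ℚ) < (N : ℚ) := by exact_mod_cast hN
  have key : (4 * N : ℚ) * ((-N : ℤ) * x ^ 2 + ((b - 2 * N * r : ℤ)) * x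
      + ((c₀ + b * r - N * r ^ 2 : ℤ))) = (Δ : ℚ) - (2 * N * (x + r) - b) ^ 2 := by
    have : ((b : ℚ)) ^ 2 + 4 * (N : ℚ) * (c₀ : ℚ) = (Δ : ℚ) := by exact_mod_cast hΔ
    push_cast
    nlinarith [this]
  nlinarith [hq, key, hNQ]
end

section
/- Define p_{N,Δ}(x) := Σ_{Q ∈ Q_{N,Δ}(x)} Q(x,1) (a finite sum). Then p_{N,Δ} is 1-periodic: p_{N,Δ}(x+1) = p_{N,Δ}(x) for all x ∈ ℚ. -/
/-- `Q_{N,Δ}(x) = {[a,b,c] : N ∣ a, b² − 4ac = Δ, a < 0 < ax² + bx + c}`. -/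
def QNDx (N Δ : ℤ) (x : ℚ) : Set (ℤ × ℤ × ℤ) :=
  {q | N ∣ q.1 ∧ q.2.1 ^ 2 - 4 * q.1 * q.2.2 = Δ ∧ q.1 < 0 ∧
    0 < (q.1 : ℚ) * x ^ 2 + (q.2.1 : ℚ) * x + (q.2.2 : ℚ)}

/-- `p_{N,Δ}(x) = Σ_{Q ∈ Q_{N,Δ}(x)} Q(x,1)`. -/
noncomputable def pND (N Δ : ℤ) (x : ℚ) : ℚ :=
  ∑ᶠ q ∈ QNDx N Δ x, ((q.1 : ℚ) * x ^ 2 + (q.2.1 : ℚ) * x + (q.2.2 : ℚ))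

/-- `p_{N,Δ}` is 1-periodic on `ℚ`. -/
theorem pND_periodic (N Δ : ℤ) (hN : 0 < N) (hΔ : 0 < Δ) (hns : ¬ IsSquare Δ)
    (x : ℚ) : pND N Δ (x + 1) = pND N Δ x := by
  unfold pND
  refine finsum_mem_eq_of_bijOn
    (fun q : ℤ × ℤ × ℤ => (q.1, 2 * q.1 + q.2.1, q.1 + q.2.1 + q.2.2)) ?_ ?_
  · refine ⟨?_, ?_, ?_⟩
    · rintro ⟨a, b, c⟩ ⟨h1, h2, h3, h4⟩
      refine ⟨h1, by linear_combination h2, h3, ?_⟩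
      have : ((a : ℚ)) * x ^ 2 + ((2 * a + b : ℤ) : ℚ) * x + ((a + b + c : ℤ) : ℚ)
          = (a : ℚ) * (x + 1) ^ 2 + (b : ℚ) * (x + 1) + (c : ℚ) := by push_cast; ring
      rw [this]; exact h4
    · rintro ⟨a, b, c⟩ - ⟨a', b', c'⟩ - h
      simp only [Prod.mk.injEq] at h
      obtain ⟨h1, h2, h3⟩ := h
      subst h1
      refine Prod.ext rfl (Prod.ext ?_ ?_) <;> simp_all <;> omega
    · rintro ⟨a, b, c⟩ ⟨h1, h2, h3, h4⟩
      refine ⟨(a, b - 2 * a, c - b + a), ⟨h1, by linear_combination h2, h3, ?_⟩, ?_⟩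
      · have : ((a : ℚ)) * (x + 1) ^ 2 + ((b - 2 * a : ℤ) : ℚ) * (x + 1) + ((c - b + a : ℤ) : ℚ)
            = (a : ℚ) * x ^ 2 + (b : ℚ) * x + (c : ℚ) := by push_cast; ring
        rw [this]; exact h4
      · exact Prod.ext rfl (Prod.ext (by ring) (by ring))
  · rintro ⟨a, b, c⟩ -
    push_cast; ring
end

section
/- For every nonzero rational x, one has Nx²·p_{N,Δ}(1/(Nx)) − p_{N,Δ}(x) = −p_{N,Δ,0}(x), where p_{N,Δ,0}(x) := Σ_{Q ∈ Q_{N,Δ}, a<0<c} Q(x,1). -/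
/-- `p_{N,Δ,0}(x) = Σ_{Q ∈ Q_{N,Δ}, a < 0 < c} Q(x,1)`. -/
noncomputable def pND0 (N Δ : ℤ) (x : ℚ) : ℚ :=
  ∑ᶠ q ∈ {q : ℤ × ℤ × ℤ |
      N ∣ q.1 ∧ q.2.1 ^ 2 - 4 * q.1 * q.2.2 = Δ ∧ q.1 < 0 ∧ 0 < q.2.2},
    ((q.1 : ℚ) * x ^ 2 + (q.2.1 : ℚ) * x + (q.2.2 : ℚ))

/-- The value `Q(x,1)` of the quadratic form `q = [a,b,c]` at `x`. -/
def fq (x : ℚ) (q : ℤ × ℤ × ℤ) : ℚ :=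
  (q.1 : ℚ) * x ^ 2 + (q.2.1 : ℚ) * x + (q.2.2 : ℚ)

lemma pND_eq (N Δ : ℤ) (x : ℚ) : pND N Δ x = ∑ᶠ q ∈ QNDx N Δ x, fq x q := rfl

lemma pND0_eq (N Δ : ℤ) (x : ℚ) :
    pND0 N Δ x = ∑ᶠ q ∈ {q : ℤ × ℤ × ℤ |
      N ∣ q.1 ∧ q.2.1 ^ 2 - 4 * q.1 * q.2.2 = Δ ∧ q.1 < 0 ∧ 0 < q.2.2}, fq x q := rfl

/-- Injectivity-based finiteness: for fixed discriminant, `c` is determined by `(a,b)`,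
so bounds on `a` and `b` give finiteness. -/
lemma finite_of_abc {Δ : ℤ} {S : Set (ℤ × ℤ × ℤ)} (A B : ℤ)
    (h : ∀ q ∈ S, q.2.1 ^ 2 - 4 * q.1 * q.2.2 = Δ ∧ q.1 ≠ 0 ∧ |q.1| ≤ A ∧ |q.2.1| ≤ B) :
    S.Finite := by
  apply Set.Finite.of_finite_image (f := fun q : ℤ × ℤ × ℤ => (q.1, q.2.1))
  · apply Set.Finite.subset (Set.finite_Icc ((-A, -B) : ℤ × ℤ) (A, B))
    rintro ⟨a, b⟩ ⟨q, hq, hqe⟩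
    obtain ⟨_, _, ha, hb⟩ := h q hq
    obtain ⟨rfl, rfl⟩ : q.1 = a ∧ q.2.1 = b := by
      simpa [Prod.ext_iff] using hqe
    rw [abs_le] at ha hb
    simp [Set.mem_Icc, Prod.le_def, ha.1, ha.2, hb.1, hb.2]
  · rintro q hq q' hq' he
    obtain ⟨hd, ha0, -, -⟩ := h q hq
    obtain ⟨hd', -, -, -⟩ := h q' hq'
    obtain ⟨h1, h2⟩ : q.1 = q'.1 ∧ q.2.1 = q'.2.1 := by simpa [Prod.ext_iff] using he
    have hc : q.2.2 = q'.2.2 := by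
      have : 4 * q.1 * q.2.2 = 4 * q.1 * q'.2.2 := by
        rw [h1] at hd ⊢
        rw [h2] at hd
        omega
      have h4 : (4 : ℤ) * q.1 ≠ 0 := by
        simp [ha0]
      exact mul_left_cancel₀ h4 this
    exact Prod.ext h1 (Prod.ext h2 hc)

/-- Finiteness of `{[a,b,c] : b² − 4ac = Δ, a < 0 < Q(x,1)}`. -/
lemma finite_S {Δ : ℤ} (hΔ : 0 < Δ) (x : ℚ) :
    {q : ℤ × ℤ × ℤ | q.2.1 ^ 2 - 4 * q.1 * q.2.2 = Δ ∧ q.1 < 0 ∧ 0 < fq x q}.Finite := by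
  set d : ℤ := (x.den : ℤ) with hdd
  have hd1 : 0 < d := by positivity
  have hdq : (0 : ℚ) < (d : ℚ) := by exact_mod_cast hd1
  have hnum : (x.num : ℚ) = x * (d : ℚ) := by
    have h := Rat.num_div_den x
    exact (div_eq_iff (by positivity)).mp h
  apply finite_of_abc (d ^ 2 * Δ) (Δ + 2 * (d ^ 2 * Δ) * |x.num|)
  rintro ⟨a, b, c⟩ ⟨hd0, ha, hf⟩
  have hdisc : ((b : ℚ)) ^ 2 - 4 * a * c = Δ := by exact_mod_cast hd0
  simp only [fq] at hf
  have haq : (a : ℚ) < 0 := by exact_mod_cast ha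
  have key : ((2 * a * x + b : ℚ)) ^ 2 = Δ + 4 * a * ((a : ℚ) * x ^ 2 + b * x + c) := by
    linear_combination hdisc
  have hlt : ((2 * a * x + b : ℚ)) ^ 2 < Δ := by nlinarith
  -- integer value d² Q(x,1)
  set g : ℤ := a * x.num ^ 2 + b * x.num * d + c * d ^ 2 with hgdef
  have hg : (g : ℚ) = (d : ℚ) ^ 2 * ((a : ℚ) * x ^ 2 + b * x + c) := by
    push_cast [hgdef]
    rw [hnum]
    ring
  have hg1 : 1 ≤ g := by
    have : (0 : ℚ) < (g : ℚ) := by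
      rw [hg]; exact mul_pos (by positivity) hf
    have : 0 < g := by exact_mod_cast this
    omega
  have hDq : (0 : ℚ) < (Δ : ℚ) := by exact_mod_cast hΔ
  have hbound : 4 * (-a) * g ≤ d ^ 2 * Δ := by
    have : (4 : ℚ) * (-(a : ℚ)) * (g : ℚ) ≤ (d : ℚ) ^ 2 * Δ := by
      rw [hg]
      nlinarith [sq_nonneg ((2 * a * x + b : ℚ))]
    exact_mod_cast this
  have haA : |a| ≤ d ^ 2 * Δ := by
    rw [abs_of_neg ha]
    nlinarith
  refine ⟨hd0, ne_of_lt ha, haA, ?_⟩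
  -- bound on b
  have hD1 : (1 : ℚ) ≤ (Δ : ℚ) := by exact_mod_cast hΔ
  have habs : |(2 * (a : ℚ) * x + b)| < (Δ : ℚ) := by
    apply abs_lt_of_sq_lt_sq _ (le_of_lt hDq)
    nlinarith
  have hd1q : (1 : ℚ) ≤ (d : ℚ) := by exact_mod_cast hd1
  have hxn : |x| ≤ (|x.num| : ℚ) := by
    have h1 : (|x.num| : ℚ) = |x| * (d : ℚ) := by
      push_cast
      rw [hnum, abs_mul, abs_of_pos hdq]
    nlinarith [abs_nonneg x]
  have haq' : |(a : ℚ)| ≤ (d : ℚ) ^ 2 * Δ := by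
    have : (|a| : ℚ) ≤ ((d ^ 2 * Δ : ℤ) : ℚ) := by exact_mod_cast haA
    push_cast at this
    exact this
  have hbq : |(b : ℚ)| ≤ (Δ : ℚ) + 2 * ((d : ℚ) ^ 2 * Δ) * |x.num| := by
    have h1 : |(b : ℚ)| ≤ |(2 * (a : ℚ) * x + b)| + |2 * (a : ℚ) * x| := by
      have := abs_sub (2 * (a : ℚ) * x + b) (2 * (a : ℚ) * x)
      simpa using this
    have h2 : |2 * (a : ℚ) * x| = 2 * |(a : ℚ)| * |x| := by
      rw [abs_mul, abs_mul, abs_two]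
    have h3 : |(a : ℚ)| * |x| ≤ ((d : ℚ) ^ 2 * (Δ : ℚ)) * (|x.num| : ℚ) :=
      mul_le_mul haq' hxn (abs_nonneg x) (by positivity)
    push_cast
    linarith [habs]
  have : (|b| : ℚ) ≤ ((Δ + 2 * (d ^ 2 * Δ) * |x.num| : ℤ) : ℚ) := by
    push_cast
    push_cast at hbq
    exact hbq
  exact_mod_cast this

/-- Finiteness of `{[a,b,c] : b² − 4ac = Δ, a < 0 < c}`. -/
lemma finite_P0 {Δ : ℤ} (hΔ : 0 < Δ) :
    {q : ℤ × ℤ × ℤ | q.2.1 ^ 2 - 4 * q.1 * q.2.2 = Δ ∧ q.1 < 0 ∧ 0 < q.2.2}.Finite := by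
  apply finite_of_abc Δ Δ
  rintro ⟨a, b, c⟩ ⟨hd, ha, hc⟩
  refine ⟨hd, ne_of_lt ha, ?_, ?_⟩
  · rw [abs_of_neg ha]; nlinarith
  · have hb2 : b ^ 2 < Δ := by nlinarith
    rw [abs_le]
    constructor <;> nlinarith [sq_nonneg (b - Δ), sq_nonneg (b + Δ)]

/-- If the discriminant is not a square, `a ≠ 0`. -/
lemma a_ne {Δ : ℤ} (hns : ¬ IsSquare Δ) {q : ℤ × ℤ × ℤ}
    (hd : q.2.1 ^ 2 - 4 * q.1 * q.2.2 = Δ) : q.1 ≠ 0 := by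
  intro h0
  exact hns ⟨q.2.1, by rw [← hd, h0]; ring⟩

/-- If the discriminant is not a square, `c ≠ 0`. -/
lemma c_ne {Δ : ℤ} (hns : ¬ IsSquare Δ) {q : ℤ × ℤ × ℤ}
    (hd : q.2.1 ^ 2 - 4 * q.1 * q.2.2 = Δ) : q.2.2 ≠ 0 := by
  intro h0
  exact hns ⟨q.2.1, by rw [← hd, h0]; ring⟩

/-- If the discriminant is not a square, `Q(x,1) ≠ 0` for rational `x`. -/
lemma fq_ne_zero {Δ : ℤ} (hns : ¬ IsSquare Δ) {q : ℤ × ℤ × ℤ}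
    (hd : q.2.1 ^ 2 - 4 * q.1 * q.2.2 = Δ) (x : ℚ) : fq x q ≠ 0 := by
  intro h0
  have hdq : ((q.2.1 : ℚ)) ^ 2 - 4 * q.1 * q.2.2 = Δ := by exact_mod_cast hd
  simp only [fq] at h0
  have : ((Δ : ℚ)) = (2 * q.1 * x + q.2.1) * (2 * q.1 * x + q.2.1) := by
    linear_combination -4 * (q.1 : ℚ) * h0 - hdq
  exact hns (Rat.isSquare_intCast_iff.mp ⟨_, this⟩)

lemma fq_neg (x : ℚ) (q : ℤ × ℤ × ℤ) : fq x (-q) = -fq x q := by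
  simp only [fq, Prod.fst_neg, Prod.snd_neg]
  push_cast
  ring

/-- The key algebraic identity behind the Fricke involution. -/
lemma fq_key {N : ℤ} (hN0 : (N : ℚ) ≠ 0) {x : ℚ} (hx : x ≠ 0) (k b c : ℤ) :
    fq x (c * N, b, k) = (N : ℚ) * x ^ 2 * fq (1 / ((N : ℚ) * x)) (N * k, b, c) := by
  simp only [fq]
  push_cast
  field_simp
  ring

/-- `Nx²·p_{N,Δ}(1/(Nx)) − p_{N,Δ}(x) = −p_{N,Δ,0}(x)` for `x ≠ 0`. -/
theorem pND_fricke_relation (N Δ : ℤ) (hN : 0 < N) (hΔ : 0 < Δ)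
    (hns : ¬ IsSquare Δ) (x : ℚ) (hx : x ≠ 0) :
    (N : ℚ) * x ^ 2 * pND N Δ (1 / ((N : ℚ) * x)) - pND N Δ x = -pND0 N Δ x := by
  classical
  have hN0 : (N : ℚ) ≠ 0 := Int.cast_ne_zero.mpr (by omega)
  set x' : ℚ := 1 / ((N : ℚ) * x) with hx'def
  have hx'0 : x' ≠ 0 := by
    simp only [hx'def]
    exact one_div_ne_zero (mul_ne_zero hN0 hx)
  have hNx' : 1 / ((N : ℚ) * x') = x := by
    rw [hx'def]
    field_simp
  -- the map underlying the Fricke involution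
  set φ : ℤ × ℤ × ℤ → ℤ × ℤ × ℤ := fun q => (q.2.2 * N, q.2.1, q.1 / N) with hφdef
  -- sets
  set C : Set (ℤ × ℤ × ℤ) := {q | N ∣ q.1 ∧ q.2.1 ^ 2 - 4 * q.1 * q.2.2 = Δ ∧ q.2.2 < 0 ∧
      0 < fq x q} with hCdef
  set P0 : Set (ℤ × ℤ × ℤ) := {q | N ∣ q.1 ∧ q.2.1 ^ 2 - 4 * q.1 * q.2.2 = Δ ∧ q.1 < 0 ∧
      0 < q.2.2} with hP0def
  -- finiteness
  have hAfin : (QNDx N Δ x).Finite := by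
    apply (finite_S hΔ x).subset
    rintro ⟨a, b, c⟩ ⟨-, h1, h2, h3⟩
    exact ⟨h1, h2, h3⟩
  have hA'fin : (QNDx N Δ x').Finite := by
    apply (finite_S hΔ x').subset
    rintro ⟨a, b, c⟩ ⟨-, h1, h2, h3⟩
    exact ⟨h1, h2, h3⟩
  have hCfin : C.Finite := by
    have himg : (fun q : ℤ × ℤ × ℤ => (q.2.2, q.2.1, q.1)) '' C ⊆
        {q : ℤ × ℤ × ℤ | q.2.1 ^ 2 - 4 * q.1 * q.2.2 = Δ ∧ q.1 < 0 ∧ 0 < fq (1 / x) q} := by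
      rintro - ⟨⟨a, b, c⟩, ⟨-, hd, hc, hf⟩, rfl⟩
      refine ⟨by linear_combination hd, hc, ?_⟩
      simp only [fq] at hf ⊢
      have : (c : ℚ) * (1 / x) ^ 2 + b * (1 / x) + a =
          ((a : ℚ) * x ^ 2 + b * x + c) / x ^ 2 := by
        field_simp
        ring
      rw [this]
      positivity
    have := (finite_S hΔ (1 / x)).subset himg
    apply Set.Finite.of_finite_image this
    intro q _ q' _ he
    simpa [Prod.ext_iff, and_comm, and_assoc, and_left_comm] using
      (by simpa [Prod.ext_iff] using he : q.2.2 = q'.2.2 ∧ q.2.1 = q'.2.1 ∧ q.1 = q'.1).symm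
  have hP0fin : P0.Finite := by
    apply (finite_P0 hΔ).subset
    rintro ⟨a, b, c⟩ ⟨-, h1, h2, h3⟩
    exact ⟨h1, h2, h3⟩
  -- convert finsums to finset sums
  set FA := hAfin.toFinset with hFA
  set FA' := hA'fin.toFinset with hFA'
  set FC := hCfin.toFinset with hFC
  set FP0 := hP0fin.toFinset with hFP0
  have epx : pND N Δ x = ∑ q ∈ FA, fq x q := by
    rw [pND_eq, ← hAfin.coe_toFinset, finsum_mem_coe_finset]
  have epx' : pND N Δ x' = ∑ q ∈ FA', fq x' q := by
    rw [pND_eq, ← hA'fin.coe_toFinset, finsum_mem_coe_finset]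
  have epx0 : pND0 N Δ x = ∑ q ∈ FP0, fq x q := by
    rw [pND0_eq, ← hP0def, ← hP0fin.coe_toFinset, finsum_mem_coe_finset]
  -- Step 1: N x² pND(x') = ∑_{C} fq x
  have hstep1 : (N : ℚ) * x ^ 2 * pND N Δ x' = ∑ q ∈ FC, fq x q := by
    rw [epx', Finset.mul_sum]
    refine Finset.sum_nbij' φ φ ?_ ?_ ?_ ?_ ?_
    · rintro ⟨a, b, c⟩ hq
      rw [hFA', Set.Finite.mem_toFinset] at hq
      obtain ⟨hdvd, hdisc, ha, hf⟩ := hq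
      obtain ⟨k, rfl⟩ := hdvd
      have hk : N * k / N = k := Int.mul_ediv_cancel_left k (by omega)
      rw [hFC, Set.Finite.mem_toFinset]
      refine ⟨dvd_mul_left N c, ?_, ?_, ?_⟩
      · simp only [hφdef, hk]
        linear_combination hdisc
      · simp only [hφdef, hk]
        have ha' : N * k < 0 := ha
        nlinarith
      · simp only [hφdef, hk]
        have hkey := fq_key hN0 hx k b c
        rw [← hx'def] at hkey
        rw [hkey]
        have : (0 : ℚ) < (N : ℚ) * x ^ 2 := by
          have : (0 : ℚ) < (N : ℚ) := by exact_mod_cast hN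
          positivity
        exact mul_pos this (by simpa [fq] using hf)
    · rintro ⟨a, b, c⟩ hq
      rw [hFC, Set.Finite.mem_toFinset] at hq
      obtain ⟨hdvd, hdisc, hc, hf⟩ := hq
      obtain ⟨k, rfl⟩ := hdvd
      have hk : N * k / N = k := Int.mul_ediv_cancel_left k (by omega)
      rw [hFA', Set.Finite.mem_toFinset]
      refine ⟨dvd_mul_left N c, ?_, ?_, ?_⟩
      · simp only [hφdef, hk]
        linear_combination hdisc
      · simp only [hφdef, hk]
        exact mul_neg_of_neg_of_pos hc hN
      · simp only [hφdef, hk]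
        show 0 < fq x' (c * N, b, k)
        have hkey := fq_key hN0 hx'0 k b c
        rw [hNx'] at hkey
        rw [hkey]
        have hpos : (0 : ℚ) < (N : ℚ) * x' ^ 2 := by
          have : (0 : ℚ) < (N : ℚ) := by exact_mod_cast hN
          positivity
        exact mul_pos hpos (by simpa [fq] using hf)
    · rintro ⟨a, b, c⟩ hq
      rw [hFA', Set.Finite.mem_toFinset] at hq
      obtain ⟨hdvd, -, -, -⟩ := hq
      obtain ⟨k, rfl⟩ := hdvd
      have hk : N * k / N = k := Int.mul_ediv_cancel_left k (by omega)
      simp only [hφdef, hk]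
      exact Prod.ext (by ring) (Prod.ext rfl (Int.mul_ediv_cancel c (by omega)))
    · rintro ⟨a, b, c⟩ hq
      rw [hFC, Set.Finite.mem_toFinset] at hq
      obtain ⟨hdvd, -, -, -⟩ := hq
      obtain ⟨k, rfl⟩ := hdvd
      have hk : N * k / N = k := Int.mul_ediv_cancel_left k (by omega)
      simp only [hφdef, hk]
      exact Prod.ext (by ring) (Prod.ext rfl (Int.mul_ediv_cancel c (by omega)))
    · rintro ⟨a, b, c⟩ hq
      rw [hFA', Set.Finite.mem_toFinset] at hq
      obtain ⟨hdvd, -, -, -⟩ := hq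
      obtain ⟨k, rfl⟩ := hdvd
      have hk : N * k / N = k := Int.mul_ediv_cancel_left k (by omega)
      simp only [hφdef, hk]
      have hkey := fq_key hN0 hx k b c
      rw [← hx'def] at hkey
      exact hkey.symm
  -- Step 2: combinatorial rearrangement
  rw [hstep1, epx, epx0]
  rw [← Finset.sum_filter_add_sum_filter_not FC (fun q => q.1 < 0) (fq x),
    ← Finset.sum_filter_add_sum_filter_not FA (fun q => q.2.2 < 0) (fq x),
    ← Finset.sum_filter_add_sum_filter_not FP0 (fun q => fq x q < 0) (fq x)]
  have h1 : FC.filter (fun q => q.1 < 0) = FA.filter (fun q => q.2.2 < 0) := by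
    ext ⟨a, b, c⟩
    simp only [Finset.mem_filter, hFC, hFA, Set.Finite.mem_toFinset, hCdef,
      Set.mem_setOf_eq, QNDx, fq]
    tauto
  have h2 : FA.filter (fun q => ¬ q.2.2 < 0) = FP0.filter (fun q => ¬ fq x q < 0) := by
    ext ⟨a, b, c⟩
    simp only [Finset.mem_filter, hFA, hFP0, Set.Finite.mem_toFinset, hP0def,
      Set.mem_setOf_eq, QNDx, fq]
    constructor
    · rintro ⟨⟨hdvd, hdisc, ha, hf⟩, hcnot⟩
      have hc0 : c ≠ 0 := c_ne hns (q := (a, b, c)) hdisc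
      exact ⟨⟨hdvd, hdisc, ha, by omega⟩, not_lt.mpr (le_of_lt hf)⟩
    · rintro ⟨⟨hdvd, hdisc, ha, hc⟩, hfnot⟩
      have hf0 : fq x (a, b, c) ≠ 0 := fq_ne_zero hns (q := (a, b, c)) hdisc x
      simp only [fq] at hf0 hfnot
      exact ⟨⟨hdvd, hdisc, ha, lt_of_le_of_ne (not_lt.mp hfnot) (Ne.symm hf0)⟩,
        not_lt.mpr (le_of_lt hc)⟩
  have h3 : ∑ q ∈ FC.filter (fun q => ¬ q.1 < 0), fq x q =
      ∑ q ∈ FP0.filter (fun q => fq x q < 0), (- fq x q) := by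
    refine Finset.sum_nbij' (fun q => -q) (fun q => -q) ?_ ?_ ?_ ?_ ?_
    · rintro ⟨a, b, c⟩ hq
      simp only [Finset.mem_filter, hFC, Set.Finite.mem_toFinset, hCdef,
        Set.mem_setOf_eq] at hq
      obtain ⟨⟨hdvd, hdisc, hc, hf⟩, hanot⟩ := hq
      simp only [Finset.mem_filter, hFP0, Set.Finite.mem_toFinset, hP0def,
        Set.mem_setOf_eq, Prod.fst_neg, Prod.snd_neg]
      have ha0 : a ≠ 0 := a_ne hns (q := (a, b, c)) hdisc
      refine ⟨⟨(dvd_neg).mpr hdvd, by linear_combination hdisc, by omega, by omega⟩, ?_⟩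
      rw [fq_neg]
      linarith
    · rintro ⟨a, b, c⟩ hq
      simp only [Finset.mem_filter, hFP0, Set.Finite.mem_toFinset, hP0def,
        Set.mem_setOf_eq] at hq
      obtain ⟨⟨hdvd, hdisc, ha, hc⟩, hf⟩ := hq
      simp only [Finset.mem_filter, hFC, Set.Finite.mem_toFinset, hCdef,
        Set.mem_setOf_eq, Prod.fst_neg, Prod.snd_neg]
      refine ⟨⟨(dvd_neg).mpr hdvd, by linear_combination hdisc, by omega, ?_⟩, by omega⟩
      rw [fq_neg]
      linarith
    · intro q _; exact neg_neg q
    · intro q _; exact neg_neg q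
    · intro q _
      rw [fq_neg]
      ring
  rw [h1, h2, h3, Finset.sum_neg_distrib]
  ring
end

section
/- Suppose √Δ > N, Q_{N,Δ} ≠ ∅, and the identity Nx²·p_{N,Δ}(1/(Nx)) − p_{N,Δ}(x) = −p_{N,Δ,0}(x) holds. Then for any nonzero rational x, Q_{N,Δ}(x) ≠ Q_{N,Δ}(0). (Equality would force p_{N,Δ}(1/(Nx)) = 0, contradicting that it is a nonempty sum of strictly positive terms.) -/
-- finiteness of QNDx
lemma qndx_finite (N Δ : ℤ) (hΔ : 0 < Δ) (y : ℚ) : (QNDx N Δ y).Finite := by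
  set p : ℤ := y.num with hp
  set d : ℤ := (y.den : ℤ) with hd
  have hd0 : 0 < d := by rw [hd]; exact_mod_cast y.pos
  have hdQ : ((d : ℚ)) ≠ 0 := by
    have : (0:ℚ) < (d:ℚ) := by exact_mod_cast hd0
    exact this.ne'
  have hyd : (p : ℚ) = y * (d : ℚ) := by
    rw [hp, hd]
    push_cast
    exact (div_eq_iff (by exact_mod_cast y.pos.ne' : ((y.den : ℚ)) ≠ 0)).mp (Rat.num_div_den y)
  have key : ∀ q ∈ QNDx N Δ y,
      q.1 ∈ Finset.Icc (-(Δ * d ^ 2)) (-1) ∧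
      q.2.1 ∈ Finset.Icc (-(Δ * d + 2 * (Δ * d ^ 2) * |p|)) (Δ * d + 2 * (Δ * d ^ 2) * |p|) := by
    rintro ⟨a, b, c⟩ ⟨-, h2, h3, h4⟩
    simp only at h2 h3 h4 ⊢
    set m : ℤ := a * p ^ 2 + b * p * d + c * d ^ 2 with hm
    have hmq : ((m : ℚ)) = ((a : ℚ) * y ^ 2 + (b : ℚ) * y + (c : ℚ)) * (d : ℚ) ^ 2 := by
      rw [hm]; push_cast; rw [hyd]; ring
    have hm1 : 1 ≤ m := by
      have : (0 : ℚ) < (m : ℚ) := by rw [hmq]; positivity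
      exact_mod_cast this
    have hsq : (2 * a * p + b * d) ^ 2 = 4 * a * m + Δ * d ^ 2 := by
      rw [hm]; linear_combination d ^ 2 * h2
    have ham : 4 * a * m ≤ 4 * a := by nlinarith
    have hub : (2 * a * p + b * d) ^ 2 ≤ 4 * a + Δ * d ^ 2 := by omega
    have hlb : 0 ≤ (2 * a * p + b * d) ^ 2 := sq_nonneg _
    have ha : -(Δ * d ^ 2) ≤ a := by nlinarith
    constructor
    · simp only [Finset.mem_Icc]; omega
    · simp only [Finset.mem_Icc]
      have hblt : (2 * a * p + b * d) ^ 2 < (Δ * d) ^ 2 := by nlinarith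
      have habs : |2 * a * p + b * d| < Δ * d := by
        have hΔd : 0 < Δ * d := by positivity
        exact abs_lt.mpr (by constructor <;> nlinarith [abs_nonneg (2*a*p+b*d), sq_abs (2*a*p+b*d)])
      have h2ap : |2 * a * p| ≤ 2 * (Δ * d ^ 2) * |p| := by
        rw [abs_mul, abs_mul]
        have : |a| ≤ Δ * d ^ 2 := by rw [abs_of_neg h3]; omega
        have hp0 : 0 ≤ |p| := abs_nonneg _
        simp only [abs_two]
        nlinarith
      have hbd : |b * d| ≤ Δ * d + 2 * (Δ * d ^ 2) * |p| := by
        have : |b * d| = |2 * a * p + b * d - 2 * a * p| := by ring_nf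
        calc |b * d| = |(2 * a * p + b * d) + (-(2 * a * p))| := by ring_nf
          _ ≤ |2 * a * p + b * d| + |(-(2 * a * p))| := abs_add_le _ _
          _ ≤ Δ * d + 2 * (Δ * d ^ 2) * |p| := by rw [abs_neg]; omega
      have hb : |b| ≤ |b * d| := by
        rw [abs_mul, abs_of_pos hd0]
        nlinarith [abs_nonneg b]
      have := abs_le.mp (le_trans hb hbd)
      omega
  have hinj : Set.InjOn (fun q : ℤ × ℤ × ℤ => (q.1, q.2.1)) (QNDx N Δ y) := by
    rintro ⟨a, b, c⟩ ⟨-, h2, h3, -⟩ ⟨a', b', c'⟩ ⟨-, h2', h3', -⟩ h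
    simp only at h2 h3 h2' h3'
    simp only [Prod.mk.injEq] at h
    obtain ⟨rfl, rfl⟩ := h
    have : c = c' := by
      have ha : a ≠ 0 := h3.ne
      have : 4 * a * c = 4 * a * c' := by omega
      exact mul_left_cancel₀ (by simpa using ha) this
    simp [this]
  apply Set.Finite.of_finite_image _ hinj
  apply Set.Finite.subset (Set.finite_Icc ((-(Δ * d ^ 2)), -(Δ * d + 2 * (Δ * d ^ 2) * |p|))
    ((-1 : ℤ), Δ * d + 2 * (Δ * d ^ 2) * |p|))
  rintro _ ⟨q, hq, rfl⟩
  obtain ⟨h1, h2⟩ := key q hq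
  simp only [Finset.mem_Icc] at h1 h2
  simp only [Set.mem_Icc, Prod.mk_le_mk]
  exact ⟨⟨h1.1, h2.1⟩, ⟨h1.2, h2.2⟩⟩

-- nonemptiness of QNDx
lemma qndx_nonempty (N Δ : ℤ) (hN : 0 < N) (hNΔ : N ^ 2 < Δ)
    (hne : {q : ℤ × ℤ × ℤ | N ∣ q.1 ∧ q.2.1 ^ 2 - 4 * q.1 * q.2.2 = Δ}.Nonempty)
    (y : ℚ) : (QNDx N Δ y).Nonempty := by
  obtain ⟨⟨a0, b0, c0⟩, hdvd, hdisc⟩ := hne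
  simp only at hdvd hdisc
  obtain ⟨k, hk⟩ := hdvd
  set u : ℚ := (b0 : ℚ) - 2 * N * y with hu
  set n : ℤ := round (u / (2 * N)) with hn
  refine ⟨(-N, b0 - 2 * N * n, -N * n ^ 2 + b0 * n - k * c0), ⟨⟨-1, by ring⟩, ?_, by omega, ?_⟩⟩
  · simp only
    rw [hk] at hdisc
    linear_combination hdisc
  · simp only
    have h2N : (0 : ℚ) < 2 * N := by positivity
    have hround := abs_sub_round (u / (2 * N))
    have hvv := abs_le.mp hround
    have hvsq : (u - 2 * N * n) ^ 2 ≤ (N : ℚ) ^ 2 := by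
      have hexp : u - 2 * N * n = (2 * N) * (u / (2 * N) - n) := by field_simp
      rw [← hn] at hvv
      have hv2 : (u / (2 * N) - (n : ℚ)) ^ 2 ≤ (1 / 2) ^ 2 := sq_le_sq' hvv.1 hvv.2
      calc (u - 2 * N * n) ^ 2 = 4 * (N : ℚ) ^ 2 * (u / (2 * N) - (n : ℚ)) ^ 2 := by
            rw [hexp]; ring
        _ ≤ 4 * (N : ℚ) ^ 2 * (1 / 2) ^ 2 := by
            apply mul_le_mul_of_nonneg_left hv2 (by positivity)
        _ = (N : ℚ) ^ 2 := by ring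
    have hΔQ : (N : ℚ) ^ 2 < (Δ : ℚ) := by exact_mod_cast hNΔ
    have hdiscQ : ((b0 - 2 * N * n : ℤ) : ℚ) ^ 2
        - 4 * ((-N : ℤ) : ℚ) * ((-N * n ^ 2 + b0 * n - k * c0 : ℤ) : ℚ) = (Δ : ℚ) := by
      push_cast
      rw [hk] at hdisc
      have : ((b0 : ℚ)) ^ 2 - 4 * ((N : ℚ) * k) * c0 = (Δ : ℚ) := by exact_mod_cast hdisc
      linear_combination this
    have hid : 4 * ((-N : ℚ)) * (((-N : ℤ) : ℚ) * y ^ 2 + ((b0 - 2 * N * n : ℤ) : ℚ) * y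
        + ((-N * n ^ 2 + b0 * n - k * c0 : ℤ) : ℚ))
        = (u - 2 * N * n) ^ 2 - (Δ : ℚ) := by
      rw [← hdiscQ, hu]; push_cast; ring
    have hneg : 4 * ((-N : ℚ)) * (((-N : ℤ) : ℚ) * y ^ 2 + ((b0 - 2 * N * n : ℤ) : ℚ) * y
        + ((-N * n ^ 2 + b0 * n - k * c0 : ℤ) : ℚ)) < 0 := by
      rw [hid]; linarith
    have hNQ : (0 : ℚ) < (N : ℚ) := by exact_mod_cast hN
    push_cast at hneg ⊢
    nlinarith

lemma pND_pos (N Δ : ℤ) (hN : 0 < N) (hΔ : 0 < Δ) (hNΔ : N ^ 2 < Δ)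
    (hne : {q : ℤ × ℤ × ℤ | N ∣ q.1 ∧ q.2.1 ^ 2 - 4 * q.1 * q.2.2 = Δ}.Nonempty)
    (y : ℚ) : 0 < pND N Δ y := by
  have hfin := qndx_finite N Δ hΔ y
  obtain ⟨e, he⟩ := qndx_nonempty N Δ hN hNΔ hne y
  rw [pND, finsum_mem_eq_finite_toFinset_sum _ hfin]
  apply Finset.sum_pos
  · intro q hq
    rw [Set.Finite.mem_toFinset] at hq
    exact hq.2.2.2
  · exact ⟨e, (Set.Finite.mem_toFinset hfin).mpr he⟩

/-- if `√Δ > N`, `Q_{N,Δ} ≠ ∅`, and the functional equation holds,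
then `Q_{N,Δ}(x) ≠ Q_{N,Δ}(0)` for every nonzero rational `x`. -/
theorem qnd_ne_at_nonzero (N Δ : ℤ) (hN : 0 < N) (hΔ : 0 < Δ)
    (hns : ¬ IsSquare Δ) (hsqrt : (N : ℝ) < Real.sqrt (Δ : ℝ))
    (hne : {q : ℤ × ℤ × ℤ | N ∣ q.1 ∧ q.2.1 ^ 2 - 4 * q.1 * q.2.2 = Δ}.Nonempty)
    (hfe : ∀ x : ℚ, x ≠ 0 →
      (N : ℚ) * x ^ 2 * pND N Δ (1 / ((N : ℚ) * x)) - pND N Δ x = -pND0 N Δ x) :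
    ∀ x : ℚ, x ≠ 0 → QNDx N Δ x ≠ QNDx N Δ 0 := by
  have hNΔ : N ^ 2 < Δ := by
    have h0N : (0 : ℝ) ≤ (N : ℝ) := by exact_mod_cast hN.le
    have := (Real.lt_sqrt h0N).mp hsqrt
    exact_mod_cast this
  intro x hx heq
  have hset : QNDx N Δ 0 = {q : ℤ × ℤ × ℤ |
      N ∣ q.1 ∧ q.2.1 ^ 2 - 4 * q.1 * q.2.2 = Δ ∧ q.1 < 0 ∧ 0 < q.2.2} := by
    ext ⟨a, b, c⟩
    simp only [QNDx, Set.mem_setOf_eq]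
    norm_num
  have hpp : pND N Δ x = pND0 N Δ x := by
    rw [pND, pND0, heq, hset]
  have hfex := hfe x hx
  rw [hpp] at hfex
  have h0 : (N : ℚ) * x ^ 2 * pND N Δ (1 / ((N : ℚ) * x)) = 0 := by linarith
  have hpos := pND_pos N Δ hN hΔ hNΔ hne (1 / ((N : ℚ) * x))
  rcases mul_eq_zero.mp h0 with h | h
  · have hN0 : (N : ℚ) ≠ 0 := by exact_mod_cast hN.ne'
    exact (mul_ne_zero hN0 (pow_ne_zero _ hx)) h
  · exact hpos.ne' h
end
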